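/- Let m ≥ 2 and let G be a finite group such that G/Z(G) is isomorphic to the dihedral group D_{2m} of order 2m, and set n = |Z(G)|. Then the spectrum of the non-commuting graph of G is the multiset consisting of 0 with multiplicity 2nm − n − m − 1, −n with multiplicity m − 1, and the two simple eigenvalues (n(m−1) ± n√((m−1)(5m−1)))/2; consequently the energy of the non-commuting graph of G equals n·((m−1) + √((m−1)(5m−1))). -/

import Mathlib

noncomputable section

/-- The non-commuting graph of a group `G`: vertices are the non-central elements,
two vertices being adjacent iff they do not commute. -/
def ncGraph (G : Type*) [Group G] : SimpleGraph {g : G // g ∉ Subgroup.center G} where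
  Adj x y := x.1 * y.1 ≠ y.1 * x.1
  symm := ⟨fun _ _ h e => h e.symm⟩
  loopless := ⟨fun _ h => h rfl⟩

noncomputable instance (G : Type*) [Group G] : DecidableRel (ncGraph G).Adj :=
  fun _ _ => Classical.propDecidable _

noncomputable instance (G : Type*) [Group G] [Fintype G] :
    Fintype {g : G // g ∉ Subgroup.center G} :=
  Fintype.ofFinite _

noncomputable instance (G : Type*) [Group G] : DecidableEq {g : G // g ∉ Subgroup.center G} :=
  Classical.decEq _

/-- The (adjacency) spectrum of the non-commuting graph of `G` : the multiset of real
eigenvalues (with multiplicity) of its adjacency matrix, i.e. the multiset of roots of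
its characteristic polynomial over `ℝ`. -/
def adjSpectrum (G : Type*) [Group G] [Fintype G] : Multiset ℝ :=
  ((ncGraph G).adjMatrix ℝ).charpoly.roots

/-- The energy of the non-commuting graph of `G`: the sum of the absolute values of the
eigenvalues (with multiplicity) of its adjacency matrix. -/
def energy (G : Type*) [Group G] [Fintype G] : ℝ :=
  ((adjSpectrum G).map (fun x => |x|)).sum

/-- The Laplacian spectrum of the non-commuting graph of `G`. -/
def lapSpectrum (G : Type*) [Group G] [Fintype G] : Multiset ℝ :=
  ((ncGraph G).lapMatrix ℝ).charpoly.roots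

/-- The Laplacian energy of the non-commuting graph of `G`. -/
def lapEnergy (G : Type*) [Group G] [Fintype G] : ℝ :=
  ((lapSpectrum G).map (fun μ =>
    |μ - 2 * ((ncGraph G).edgeFinset.card : ℝ) /
      (Fintype.card {g : G // g ∉ Subgroup.center G} : ℝ)|)).sum


section auxCharpoly
open Polynomial Matrix Finset

lemma eval_charpoly' {V : Type} [Fintype V] [DecidableEq V] (M : Matrix V V ℝ) (x : ℝ) :
    M.charpoly.eval x = (x • (1 : Matrix V V ℝ) - M).det := by
  rw [Matrix.charpoly, ← Polynomial.coe_evalRingHom, RingHom.map_det]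
  congr 1
  ext i j
  by_cases h : i = j <;>
    simp [h, Matrix.charmatrix_apply_eq, Matrix.charmatrix_apply_ne, Matrix.one_apply]

lemma det_smul_one_sub (m n : ℕ) [NeZero m] {V : Type} [Fintype V] [DecidableEq V]
    (hm : 2 ≤ m)
    (p : V → Option (ZMod m))
    (hsome : ∀ i, (Finset.univ.filter fun v => p v = some i).card = n)
    (hnone : (Finset.univ.filter fun v => p v = none).card = n * (m - 1))
    (hN : m + 2 ≤ Fintype.card V)
    (A : Matrix V V ℝ) (hA : ∀ v w, A v w = if p v = p w then (0:ℝ) else 1)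
    (x : ℝ) (hx0 : x ≠ 0) (hxn : x + n ≠ 0) (hxa : x + n * ((m:ℝ) - 1) ≠ 0)
    (hxN : x - Fintype.card V ≠ 0) :
    (x • (1 : Matrix V V ℝ) - A).det
      = x ^ (Fintype.card V - m - 1) * (x + n) ^ (m - 1)
        * (x^2 - n * ((m:ℝ)-1) * x - (n:ℝ)^2 * m * ((m:ℝ)-1)) := by
  classical
  set c : Option (ZMod m) → ℝ :=
    fun k => ((Finset.univ.filter fun v => p v = k).card : ℝ) with hc
  have hcsome : ∀ i : ZMod m, c (some i) = n := by
    intro i; rw [hc]; exact_mod_cast congrArg _ (hsome i)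
  have hcnone : c none = n * ((m:ℝ) - 1) := by
    rw [hc]; simp only [hnone]
    push_cast [Nat.cast_sub (by omega : 1 ≤ m)]
    ring
  have hcard : (Fintype.card V : ℝ) = n * ((m:ℝ)-1) + m * n := by
    have h1 : Fintype.card V = ∑ k : Option (ZMod m),
        (Finset.univ.filter fun v => p v = k).card := by
      rw [← Finset.card_univ]
      exact Finset.card_eq_sum_card_fiberwise (fun a _ => Finset.mem_univ (p a))
    rw [h1, Fintype.sum_option, hnone]
    simp only [hsome, Finset.sum_const, Finset.card_univ, ZMod.card, smul_eq_mul]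
    push_cast [Nat.cast_sub (by omega : 1 ≤ m)]
    ring
  -- the rank factorization
  set U : Matrix V (Option (Option (ZMod m))) ℝ :=
    fun v k' => k'.rec 1 (fun k => if p v = k then 1 else 0) with hU
  set W : Matrix (Option (Option (ZMod m))) V ℝ :=
    fun k' v => k'.rec 1 (fun k => -(if p v = k then 1 else 0)) with hW
  have hAUW : A = U * W := by
    ext v w
    rw [Matrix.mul_apply, Fintype.sum_option]
    have h2 : ∀ k : Option (ZMod m), U v (some k) * W (some k) w
        = if p v = k then -(if p w = k then (1:ℝ) else 0) else 0 := by
      intro k; rw [hU, hW]; by_cases h : p v = k <;> simp [h]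
    simp only [h2, Finset.sum_ite_eq, Finset.mem_univ, if_true]
    rw [hA, hU, hW]
    by_cases h : p v = p w <;> simp [h, eq_comm]
  -- indicator sums
  have hind : ∀ k : Option (ZMod m), (∑ v : V, (if p v = k then (1:ℝ) else 0)) = c k := by
    intro k; rw [Finset.sum_boole, hc]
  have hone : (∑ _v : V, (1:ℝ)) = (Fintype.card V : ℝ) := by
    simp
  -- small matrix
  set S : Matrix (Option (Option (ZMod m))) (Option (Option (ZMod m))) ℝ := W * U with hS
  set d : Option (Option (ZMod m)) → ℝ :=
    fun k' => k'.rec (x - Fintype.card V) (fun k => x + c k) with hd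
  have hdne : ∀ k', d k' ≠ 0 := by
    rintro (_ | (_ | i))
    · exact hxN
    · rw [hd]; simpa [hcnone] using hxa
    · rw [hd]; simpa [hcsome] using hxn
  set UU : Matrix (Option (Option (ZMod m))) (Fin 2) ℝ :=
    fun k' j => k'.rec (if j = 0 then 1 else 0) (fun k => if j = 0 then 0 else c k) with hUU
  set WW : Matrix (Fin 2) (Option (Option (ZMod m))) ℝ :=
    fun j k' => k'.rec (if j = 0 then 0 else 1) (fun k => if j = 0 then -(c k) else 0) with hWW
  have hDS : x • (1 : Matrix (Option (Option (ZMod m))) (Option (Option (ZMod m))) ℝ) - S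
      = Matrix.diagonal d + UU * WW := by
    ext k' k''
    rw [Matrix.add_apply, Matrix.mul_apply, Fin.sum_univ_two, Matrix.sub_apply,
      Matrix.smul_apply, Matrix.one_apply, hS, Matrix.mul_apply]
    match k', k'' with
    | none, none =>
        simp [hU, hW, hUU, hWW, hd, Matrix.diagonal_apply_eq, hone]
    | none, some k =>
        simp [hU, hW, hUU, hWW,
          Matrix.diagonal_apply_ne _ (by simp : (none : Option (Option (ZMod m))) ≠ some k),
          hind k]
    | some k, none =>
        rw [Matrix.diagonal_apply_ne _ (by simp : (some k : Option (Option (ZMod m))) ≠ none)]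
        have h3 : ∀ v : V, W (some k) v * U v none = -(if p v = k then (1:ℝ) else 0) := by
          intro v; rw [hU, hW]; ring_nf
        simp [h3, hUU, hWW, hind k]
    | some k, some k'' =>
        have h4 : ∀ v : V, W (some k) v * U v (some k'')
            = -((if p v = k then (1:ℝ) else 0) * (if p v = k'' then (1:ℝ) else 0)) := by
          intro v; rw [hU, hW]; ring
        by_cases h : k = k''
        · subst h
          have h5 : ∀ v : V, (if p v = k then (1:ℝ) else 0) * (if p v = k then (1:ℝ) else 0)
              = if p v = k then (1:ℝ) else 0 := by
            intro v; by_cases h : p v = k <;> simp [h]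
          rw [Matrix.diagonal_apply_eq]
          simp only [h4, h5, Finset.sum_neg_distrib, hind k, hd]
          simp [hUU, hWW]
        · have h5 : ∀ v : V, (if p v = k then (1:ℝ) else 0) * (if p v = k'' then (1:ℝ) else 0)
              = 0 := by
            intro v
            by_cases h1 : p v = k
            · have h2' : p v ≠ k'' := by rw [h1]; exact h
              simp [h1, h2', h]
            · simp [h1]
          rw [Matrix.diagonal_apply_ne _ (by simp [h] :
            (some k : Option (Option (ZMod m))) ≠ some k'')]
          simp [h4, h5, hUU, hWW, h]
  -- invert the diagonal
  have hDinv : Matrix.diagonal d * Matrix.diagonal (fun k' => (d k')⁻¹) = 1 := by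
    rw [Matrix.diagonal_mul_diagonal]
    have h6 : (fun k' => d k' * (d k')⁻¹) = fun _ => (1:ℝ) :=
      funext fun k' => mul_inv_cancel₀ (hdne k')
    rw [h6, Matrix.diagonal_one]
  have hsplit : Matrix.diagonal d + UU * WW
      = Matrix.diagonal d * (1 + Matrix.diagonal (fun k' => (d k')⁻¹) * (UU * WW)) := by
    rw [Matrix.mul_add, Matrix.mul_one, ← Matrix.mul_assoc, hDinv, Matrix.one_mul]
  have hdetD : (Matrix.diagonal d).det
      = (x - Fintype.card V) * ((x + n * ((m:ℝ)-1)) * (x + n)^m) := by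
    rw [Matrix.det_diagonal, Fintype.prod_option, Fintype.prod_option]
    simp only [hd]
    simp [hcsome, hcnone, Finset.prod_const, Finset.card_univ, ZMod.card]
  set σ : ℝ := ∑ k : Option (ZMod m), (c k)^2 * (x + c k)⁻¹ with hσ
  have hσval : σ = (n*((m:ℝ)-1))^2 * (x + n*((m:ℝ)-1))⁻¹ + m * ((n:ℝ)^2 * (x+(n:ℝ))⁻¹) := by
    rw [hσ, Fintype.sum_option]
    simp [hcsome, hcnone, Finset.sum_const, Finset.card_univ, ZMod.card]
  set E : Matrix (Fin 2) (Fin 2) ℝ := WW * (Matrix.diagonal (fun k' => (d k')⁻¹) * UU) with hE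
  have hEval : ∀ j j', E j j' = ∑ k' : Option (Option (ZMod m)),
      WW j k' * ((d k')⁻¹ * UU k' j') := by
    intro j j'
    rw [hE, Matrix.mul_apply]
    refine Finset.sum_congr rfl fun k' _ => ?_
    rw [Matrix.diagonal_mul]
  have hE00 : E 0 0 = 0 := by
    rw [hEval, Fintype.sum_option]; simp [hUU, hWW]
  have hE01 : E 0 1 = -σ := by
    rw [hEval, Fintype.sum_option, hσ, ← Finset.sum_neg_distrib]
    have h0 : WW 0 none * ((d none)⁻¹ * UU none 1) = 0 := by simp [hUU, hWW]
    rw [h0, zero_add]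
    refine Finset.sum_congr rfl fun k _ => ?_
    have e1 : WW 0 (some k) = -(c k) := by simp [hWW]
    have e2 : UU (some k) 1 = c k := by simp [hUU]
    have e3 : d (some k) = x + c k := by simp [hd]
    rw [e1, e2, e3]; ring
  have hE10 : E 1 0 = (x - Fintype.card V)⁻¹ := by
    rw [hEval, Fintype.sum_option]; simp [hUU, hWW, hd]
  have hE11 : E 1 1 = 0 := by
    rw [hEval, Fintype.sum_option]; simp [hUU, hWW]
  have hdet2 : (1 + E).det = 1 + σ * (x - Fintype.card V)⁻¹ := by
    rw [Matrix.det_fin_two]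
    simp only [Matrix.add_apply, Matrix.one_apply_eq,
      Matrix.one_apply_ne (by decide : (0 : Fin 2) ≠ 1),
      Matrix.one_apply_ne (by decide : (1 : Fin 2) ≠ 0), hE00, hE01, hE10, hE11]
    ring
  have hdetS : (x • (1 : Matrix (Option (Option (ZMod m))) (Option (Option (ZMod m))) ℝ)
      - S).det = (x - Fintype.card V) * ((x + n * ((m:ℝ)-1)) * (x + n)^m)
        * (1 + σ * (x - Fintype.card V)⁻¹) := by
    rw [hDS, hsplit, Matrix.det_mul, hdetD]
    rw [← Matrix.mul_assoc (Matrix.diagonal fun k' => (d k')⁻¹) UU WW]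
    rw [Matrix.det_one_add_mul_comm]
    rw [← hE, hdet2]
  -- rank reduction
  have hcardK : Fintype.card (Option (Option (ZMod m))) = m + 2 := by
    simp [ZMod.card]
  set t : ℝ := (1 + W * ((-x⁻¹) • U)).det with ht
  have hsm : ∀ (P : Type) [Fintype P] [DecidableEq P] (M1 : Matrix V P ℝ) (M2 : Matrix P V ℝ),
      x • (1 : Matrix V V ℝ) - M1 * M2 = x • (1 + ((-x⁻¹) • M1) * M2) := by
    intro P _ _ M1 M2
    rw [Matrix.smul_mul, smul_add, smul_smul]
    rw [mul_neg, mul_inv_cancel₀ hx0, neg_smul, one_smul, sub_eq_add_neg]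
  have hdetA : (x • (1 : Matrix V V ℝ) - A).det = x ^ (Fintype.card V) * t := by
    rw [hAUW, hsm, Matrix.det_smul, Matrix.det_one_add_mul_comm, ht]
  have hsm2 : x • (1 : Matrix (Option (Option (ZMod m))) (Option (Option (ZMod m))) ℝ) - S
      = x • (1 + W * ((-x⁻¹) • U)) := by
    rw [hS]
    have : W * ((-x⁻¹) • U) = (-x⁻¹) • (W * U) := Matrix.mul_smul W _ U
    rw [this, smul_add, smul_smul, mul_neg, mul_inv_cancel₀ hx0, neg_smul, one_smul,
      sub_eq_add_neg]
  have hdetS2 : (x • (1 : Matrix (Option (Option (ZMod m))) (Option (Option (ZMod m))) ℝ)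
      - S).det = x ^ (m + 2) * t := by
    rw [hsm2, Matrix.det_smul, hcardK, ht]
  -- combine
  have hp : x ^ (Fintype.card V) = x ^ (Fintype.card V - m - 2) * x ^ (m+2) := by
    rw [← pow_add]; congr 1; omega
  have hfinal : (x • (1 : Matrix V V ℝ) - A).det
      = x ^ (Fintype.card V - m - 2) * ((x - Fintype.card V)
        * ((x + n * ((m:ℝ)-1)) * (x + n)^m) * (1 + σ * (x - Fintype.card V)⁻¹)) := by
    rw [hdetA, hp, mul_assoc, ← hdetS2, hdetS]
  rw [hfinal]
  have hmpow : (x + (n:ℝ))^m = (x + (n:ℝ))^(m-1) * (x+(n:ℝ)) := by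
    rw [← pow_succ]; congr 1; omega
  have hxpow : x ^ (Fintype.card V - m - 1) = x ^ (Fintype.card V - m - 2) * x := by
    rw [← pow_succ]; congr 1; omega
  rw [hmpow, hxpow]
  have hxN' : x - ((n:ℝ) * ((m:ℝ)-1) + (m:ℝ) * (n:ℝ)) ≠ 0 := by rw [← hcard]; exact hxN
  have hsuff : (x - ((n:ℝ) * ((m:ℝ)-1) + (m:ℝ)*(n:ℝ))) * ((x + n * ((m:ℝ)-1)) * (x+(n:ℝ)))
      * (1 + ((n*((m:ℝ)-1))^2 * (x + n*((m:ℝ)-1))⁻¹ + m * ((n:ℝ)^2 * (x+(n:ℝ))⁻¹))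
          * (x - ((n:ℝ) * ((m:ℝ)-1) + (m:ℝ)*(n:ℝ)))⁻¹)
      = x * (x^2 - n * ((m:ℝ)-1) * x - (n:ℝ)^2 * m * ((m:ℝ)-1)) := by
    generalize ha : x - ((n:ℝ) * ((m:ℝ)-1) + (m:ℝ) * (n:ℝ)) = a at hxN' ⊢
    field_simp
    rw [← ha]
    ring
  rw [hσval, hcard]
  linear_combination (x ^ (Fintype.card V - m - 2) * (x+(n:ℝ))^(m-1)) * hsuff

lemma charpoly_roots (m n : ℕ) [NeZero m] {V : Type} [Fintype V] [DecidableEq V]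
    (hm : 2 ≤ m)
    (p : V → Option (ZMod m))
    (hsome : ∀ i, (Finset.univ.filter fun v => p v = some i).card = n)
    (hnone : (Finset.univ.filter fun v => p v = none).card = n * (m - 1))
    (hN : m + 2 ≤ Fintype.card V)
    (A : Matrix V V ℝ) (hA : ∀ v w, A v w = if p v = p w then (0:ℝ) else 1) :
    A.charpoly.roots = Multiset.replicate (Fintype.card V - m - 1) (0:ℝ)
      + Multiset.replicate (m-1) (-(n:ℝ))
      + {((n:ℝ) * ((m:ℝ)-1) + (n:ℝ) * Real.sqrt (((m:ℝ)-1)*(5*(m:ℝ)-1)))/2,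
         ((n:ℝ) * ((m:ℝ)-1) - (n:ℝ) * Real.sqrt (((m:ℝ)-1)*(5*(m:ℝ)-1)))/2} := by
  classical
  have hm2 : (2:ℝ) ≤ (m:ℝ) := by exact_mod_cast hm
  have hD : (0:ℝ) ≤ ((m:ℝ)-1)*(5*(m:ℝ)-1) :=
    mul_nonneg (by linarith) (by linarith)
  have hs : Real.sqrt (((m:ℝ)-1)*(5*(m:ℝ)-1)) ^ 2 = ((m:ℝ)-1)*(5*(m:ℝ)-1) :=
    Real.sq_sqrt hD
  set lp : ℝ := ((n:ℝ) * ((m:ℝ)-1) + (n:ℝ) * Real.sqrt (((m:ℝ)-1)*(5*(m:ℝ)-1)))/2 with hlp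
  set lm : ℝ := ((n:ℝ) * ((m:ℝ)-1) - (n:ℝ) * Real.sqrt (((m:ℝ)-1)*(5*(m:ℝ)-1)))/2 with hlm
  set T : Multiset ℝ := Multiset.replicate (Fintype.card V - m - 1) (0:ℝ)
      + Multiset.replicate (m-1) (-(n:ℝ)) + {lp, lm} with hT
  have hquad : ∀ x : ℝ, (x - lp) * (x - lm)
      = x^2 - (n:ℝ) * ((m:ℝ)-1) * x - (n:ℝ)^2 * (m:ℝ) * ((m:ℝ)-1) := by
    intro x
    rw [hlp, hlm]
    linear_combination (-(n:ℝ)^2/4) * hs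
  have hch : A.charpoly = (T.map fun a => Polynomial.X - Polynomial.C a).prod := by
    apply Polynomial.eq_of_infinite_eval_eq
    have hfin : ({0, -(n:ℝ), -((n:ℝ)*((m:ℝ)-1)), ((Fintype.card V : ℕ) : ℝ)} : Set ℝ).Finite :=
      Set.toFinite _
    refine Set.Infinite.mono ?_ hfin.infinite_compl
    intro x hx
    simp only [Set.mem_compl_iff, Set.mem_insert_iff, Set.mem_singleton_iff, not_or] at hx
    obtain ⟨hx0, hxn, hxa, hxN⟩ := hx
    have hxn' : x + (n:ℝ) ≠ 0 := fun h => hxn (by linarith)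
    have hxa' : x + (n:ℝ) * ((m:ℝ)-1) ≠ 0 := fun h => hxa (by linarith)
    have hxN' : x - ((Fintype.card V : ℕ) : ℝ) ≠ 0 := fun h => hxN (by linarith)
    show A.charpoly.eval x = _
    rw [eval_charpoly', det_smul_one_sub m n hm p hsome hnone hN A hA x hx0 hxn' hxa' hxN']
    rw [Polynomial.eval_multiset_prod, Multiset.map_map, hT]
    simp only [Multiset.map_add, Multiset.prod_add, Multiset.map_replicate,
      Function.comp_apply, Polynomial.eval_sub, Polynomial.eval_X, Polynomial.eval_C,
      Multiset.prod_replicate, Multiset.insert_eq_cons, Multiset.map_cons,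
      Multiset.map_singleton, Multiset.prod_cons, Multiset.prod_singleton]
    rw [hquad x]
    ring
  rw [hch, Polynomial.roots_multiset_prod_X_sub_C]

end auxCharpoly

section grp
open DihedralGroup
variable {G : Type} [Group G] {m : ℕ}

/-- index of a rotation -/
def rotVal : DihedralGroup m → ZMod m := fun d => match d with | .r i => i | .sr _ => 0

/-- the part of an element: `none` for rotations, `some i` for the reflection `sr i`. -/
def dpart : DihedralGroup m → Option (ZMod m) :=
  fun d => match d with | .r _ => none | .sr i => some i

/-- rotations as range of a hom -/
def rotHom (m : ℕ) : Multiplicative (ZMod m) →* DihedralGroup m where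
  toFun := fun i => .r (Multiplicative.toAdd i)
  map_one' := one_def.symm
  map_mul' := fun a b => by simp [r_mul_r]

lemma rot_comm (π : G →* DihedralGroup m) (hker : ∀ g : G, π g = 1 ↔ g ∈ Subgroup.center G)
    (g h : G) (hg : ∃ i, π g = .r i) (hh : ∃ j, π h = .r j) : g * h = h * g := by
  classical
  set H : Subgroup G := Subgroup.comap π (rotHom m).range with hH
  have hmem : ∀ (a : G), (∃ i, π a = .r i) → a ∈ H := by
    rintro a ⟨i, hi⟩
    exact Subgroup.mem_comap.mpr ⟨Multiplicative.ofAdd i, hi.symm⟩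
  have hrot : ∀ a : ↥H, ∃ i, π a.1 = .r i := by
    rintro ⟨a, ha⟩
    obtain ⟨i, hi⟩ := Subgroup.mem_comap.mp ha
    exact ⟨Multiplicative.toAdd i, hi.symm⟩
  set f : ↥H →* Multiplicative (ZMod m) :=
    { toFun := fun h => Multiplicative.ofAdd (rotVal (π h.1))
      map_one' := by
        show Multiplicative.ofAdd (rotVal (π 1)) = 1
        rw [map_one, one_def]; rfl
      map_mul' := by
        rintro a b
        obtain ⟨i, hi⟩ := hrot a
        obtain ⟨j, hj⟩ := hrot b
        have hab : π (a*b).1 = .r (i + j) := by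
          rw [Subgroup.coe_mul, map_mul, hi, hj, r_mul_r]
        show Multiplicative.ofAdd (rotVal (π ((a*b) : ↥H).1))
            = Multiplicative.ofAdd (rotVal (π a.1)) * Multiplicative.ofAdd (rotVal (π b.1))
        rw [hab, hi, hj]
        rfl } with hf
  have hker' : f.ker ≤ Subgroup.center ↥H := by
    intro a ha
    obtain ⟨i, hi⟩ := hrot a
    have h1 : rotVal (π a.1) = 0 := by
      have := MonoidHom.mem_ker.mp ha
      simpa [hf] using this
    rw [hi] at h1
    have h2 : π a.1 = 1 := by rw [hi, show i = 0 from h1, one_def]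
    have h3 : a.1 ∈ Subgroup.center G := (hker a.1).mp h2
    rw [Subgroup.mem_center_iff]
    intro b
    exact Subtype.ext (Subgroup.mem_center_iff.mp h3 b.1)
  have hcomm := commutative_of_cyclic_center_quotient f hker'
  have := hcomm ⟨g, hmem g hg⟩ ⟨h, hmem h hh⟩
  exact congrArg Subtype.val this

lemma sr_inv (i : ZMod m) : (DihedralGroup.sr i : DihedralGroup m)⁻¹ = .sr i :=
  inv_eq_of_mul_eq_one_right (sr_mul_self i)

lemma key_noncentral (π : G →* DihedralGroup m)
    (hker : ∀ g : G, π g = 1 ↔ g ∈ Subgroup.center G)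
    (x y : G) (i k : ZMod m) (hx : π x = .sr i) (hy : π y = .r k)
    (hyc : y ∉ Subgroup.center G) (hcomm : x * y = y * x) : False := by
  apply hyc
  rw [Subgroup.mem_center_iff]
  intro g
  cases hg : π g with
  | r j => exact rot_comm π hker g y ⟨j, hg⟩ ⟨k, hy⟩
  | sr j =>
    have h1 : π (x⁻¹ * g) = .r (j - i) := by
      rw [map_mul, map_inv, hx, hg, sr_inv, sr_mul_sr]
    have h2 : Commute (x⁻¹ * g) y := rot_comm π hker (x⁻¹*g) y ⟨j - i, h1⟩ ⟨k, hy⟩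
    have h3 : Commute x y := hcomm
    have h4 : Commute g y := by
      have h5 := Commute.mul_left h3 h2
      rwa [mul_inv_cancel_left] at h5
    exact h4

lemma comm_iff_part (π : G →* DihedralGroup m)
    (hker : ∀ g : G, π g = 1 ↔ g ∈ Subgroup.center G)
    (a b : G) (ha : a ∉ Subgroup.center G) (hb : b ∉ Subgroup.center G) :
    a * b = b * a ↔ dpart (π a) = dpart (π b) := by
  constructor
  · intro hc
    cases hax : π a with
    | r i =>
      cases hbx : π b with
      | r j => simp [dpart, hax, hbx]
      | sr j => exact (key_noncentral π hker b a j i hbx hax ha hc.symm).elim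
    | sr i =>
      cases hbx : π b with
      | r j => exact (key_noncentral π hker a b i j hax hbx hb hc).elim
      | sr j =>
        by_cases hij : i = j
        · simp [dpart, hax, hbx, hij]
        · exfalso
          have hy : π (b * a⁻¹) = .r (i - j) := by
            rw [map_mul, map_inv, hbx, hax, sr_inv, sr_mul_sr]
          have hyc : b * a⁻¹ ∉ Subgroup.center G := by
            intro hc'
            have h5 : π (b*a⁻¹) = 1 := (hker _).mpr hc'
            rw [hy, one_def] at h5
            exact hij (by simpa [sub_eq_zero, -DihedralGroup.r_zero] using h5)
          have hcxy : a * (b * a⁻¹) = (b * a⁻¹) * a := by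
            have c1 : Commute a b := hc
            have c2 : Commute a a⁻¹ := (Commute.refl a).inv_right
            exact c1.mul_right c2
          exact key_noncentral π hker a (b*a⁻¹) i (i - j) hax hy hyc hcxy
  · intro hp
    cases hax : π a with
    | r i =>
      cases hbx : π b with
      | r j => exact rot_comm π hker a b ⟨i, hax⟩ ⟨j, hbx⟩
      | sr j => rw [hax, hbx] at hp; simp [dpart] at hp
    | sr i =>
      cases hbx : π b with
      | r j => rw [hax, hbx] at hp; simp [dpart] at hp
      | sr j =>
        rw [hax, hbx] at hp
        have hij : i = j := by simpa [dpart] using hp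
        subst hij
        have h1 : π (a⁻¹ * b) = 1 := by
          rw [map_mul, map_inv, hax, hbx, sr_inv, sr_mul_sr, sub_self, one_def]
        have h2 : a⁻¹ * b ∈ Subgroup.center G := (hker _).mp h1
        have hz : Commute a (a⁻¹ * b) := Subgroup.mem_center_iff.mp h2 a
        have hb' : b = a * (a⁻¹ * b) := (mul_inv_cancel_left a b).symm
        have hco : Commute a b := by rw [hb']; exact (Commute.refl a).mul_right hz
        exact hco

lemma fiber_card [Fintype G] (π : G →* DihedralGroup m)
    (hker : ∀ g : G, π g = 1 ↔ g ∈ Subgroup.center G)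
    (hsurj : Function.Surjective π) (d : DihedralGroup m) :
    (Finset.univ.filter fun g : G => π g = d).card = Nat.card (Subgroup.center G) := by
  classical
  obtain ⟨g₀, hg₀⟩ := hsurj d
  have h1 : Nat.card (Subgroup.center G)
      = (Finset.univ.filter fun g : G => g ∈ Subgroup.center G).card := by
    rw [Nat.card_eq_fintype_card, Fintype.card_subtype]
  rw [h1]
  refine Finset.card_bij' (fun g _ => g₀⁻¹ * g) (fun z _ => g₀ * z) ?_ ?_ ?_ ?_
  · intro g hg
    rw [Finset.mem_filter] at hg ⊢
    refine ⟨Finset.mem_univ _, (hker _).mp ?_⟩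
    rw [map_mul, map_inv, hg₀, hg.2, inv_mul_cancel]
  · intro z hz
    rw [Finset.mem_filter] at hz ⊢
    refine ⟨Finset.mem_univ _, ?_⟩
    rw [map_mul, hg₀, (hker z).mpr hz.2, mul_one]
  · intro g _; simp
  · intro z _; simp

lemma fiber_cardV [Fintype G] (π : G →* DihedralGroup m)
    (hker : ∀ g : G, π g = 1 ↔ g ∈ Subgroup.center G)
    (hsurj : Function.Surjective π) (d : DihedralGroup m) (hd : d ≠ 1) :
    (Finset.univ.filter fun v : {g : G // g ∉ Subgroup.center G} => π v.1 = d).card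
      = Nat.card (Subgroup.center G) := by
  classical
  rw [← fiber_card π hker hsurj d]
  refine Finset.card_bij' (fun v _ => v.1)
    (fun g hg => ⟨g, fun hc => hd (by
      have h2 : π g = d := (Finset.mem_filter.mp hg).2
      rw [← h2]; exact (hker g).mpr hc)⟩) ?_ ?_ ?_ ?_
  · intro v hv
    rw [Finset.mem_filter] at hv ⊢
    exact ⟨Finset.mem_univ _, hv.2⟩
  · intro g hg
    rw [Finset.mem_filter] at hg ⊢
    exact ⟨Finset.mem_univ _, hg.2⟩
  · intro v _; rfl
  · intro g _; rfl
end grp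


/-- If `G/Z(G) ≅ D_{2m}` (the dihedral group of order `2m`, `m ≥ 2`) and `n = |Z(G)|`,
then the spectrum of the non-commuting graph of `G` is
`{0^(2nm - n - m - 1), (-n)^(m-1), ((n(m-1) ± n√((m-1)(5m-1)))/2)^1}` and its energy is
`n((m-1) + √((m-1)(5m-1)))`. -/

theorem spectrum_energy_ncGraph_central_quotient_dihedral (m : ℕ) (hm : 2 ≤ m)
    (G : Type) [Group G] [Fintype G]
    (hiso : Nonempty ((G ⧸ Subgroup.center G) ≃* DihedralGroup m)) :
    (adjSpectrum G =
      Multiset.replicate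
          (2 * Nat.card (Subgroup.center G) * m - Nat.card (Subgroup.center G) - m - 1)
          (0 : ℝ) +
      Multiset.replicate (m - 1) (-(Nat.card (Subgroup.center G) : ℝ)) +
      {((Nat.card (Subgroup.center G) : ℝ) * ((m : ℝ) - 1) +
          (Nat.card (Subgroup.center G) : ℝ) *
            Real.sqrt (((m : ℝ) - 1) * (5 * (m : ℝ) - 1))) / 2,
       ((Nat.card (Subgroup.center G) : ℝ) * ((m : ℝ) - 1) -
          (Nat.card (Subgroup.center G) : ℝ) *
            Real.sqrt (((m : ℝ) - 1) * (5 * (m : ℝ) - 1))) / 2}) ∧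
    energy G = (Nat.card (Subgroup.center G) : ℝ) *
      (((m : ℝ) - 1) + Real.sqrt (((m : ℝ) - 1) * (5 * (m : ℝ) - 1))) := by
  classical
  obtain ⟨φ⟩ := hiso
  haveI : NeZero m := ⟨by omega⟩
  set n := Nat.card (Subgroup.center G) with hn
  let π : G →* DihedralGroup m := φ.toMonoidHom.comp (QuotientGroup.mk' (Subgroup.center G))
  have hker : ∀ g : G, π g = 1 ↔ g ∈ Subgroup.center G := by
    intro g
    constructor
    · intro h
      have h1 : QuotientGroup.mk' (Subgroup.center G) g = 1 := by
        apply φ.injective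
        simpa [π] using h
      exact (QuotientGroup.eq_one_iff g).mp h1
    · intro h
      have h1 : QuotientGroup.mk' (Subgroup.center G) g = 1 := (QuotientGroup.eq_one_iff g).mpr h
      show φ.toMonoidHom (QuotientGroup.mk' (Subgroup.center G) g) = 1
      rw [h1, map_one]
  have hsurj : Function.Surjective π := φ.surjective.comp (QuotientGroup.mk'_surjective _)
  let p : {g : G // g ∉ Subgroup.center G} → Option (ZMod m) := fun v => dpart (π v.1)
  -- cardinality of G and of the vertex set
  have hq : Nat.card (G ⧸ Subgroup.center G) = 2 * m := by
    rw [Nat.card_congr φ.toEquiv, Nat.card_eq_fintype_card, DihedralGroup.card]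
  have hG : Fintype.card G = 2 * m * n := by
    rw [← Nat.card_eq_fintype_card,
      Subgroup.card_eq_card_quotient_mul_card_subgroup (Subgroup.center G), hq, hn]
  have hZfin : Fintype.card {g : G // g ∈ Subgroup.center G} = n := by
    rw [hn, Nat.card_eq_fintype_card]
  have hcardV : Fintype.card {g : G // g ∉ Subgroup.center G} = 2 * n * m - n := by
    have h1 := Fintype.card_subtype_compl (fun g : G => g ∈ Subgroup.center G)
    rw [h1, hZfin, hG]
    congr 1
    ring
  -- fiber sizes
  have hsome : ∀ i : ZMod m,
      (Finset.univ.filter fun v : {g : G // g ∉ Subgroup.center G} => p v = some i).card = n := by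
    intro i
    have he : ∀ v : {g : G // g ∉ Subgroup.center G}, p v = some i ↔ π v.1 = .sr i := by
      intro v; cases h : π v.1 with
      | r j => simp [p, dpart, h]
      | sr j => simp [p, dpart, h]
    rw [Finset.filter_congr (fun v _ => he v)]
    exact fiber_cardV π hker hsurj (.sr i) (by rw [DihedralGroup.one_def]; intro h; cases h)
  have haux : 2*n*m - n = n*(m-1) + m*n := by
    obtain ⟨m', rfl⟩ : ∃ m', m = m' + 1 := ⟨m-1, by omega⟩
    apply Nat.sub_eq_of_eq_add
    simp only [Nat.add_sub_cancel]
    ring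
  have hnone :
      (Finset.univ.filter fun v : {g : G // g ∉ Subgroup.center G} => p v = none).card
        = n * (m - 1) := by
    have htot : Fintype.card {g : G // g ∉ Subgroup.center G}
        = ∑ k : Option (ZMod m),
          (Finset.univ.filter fun v : {g : G // g ∉ Subgroup.center G} => p v = k).card := by
      rw [← Finset.card_univ]
      exact Finset.card_eq_sum_card_fiberwise (fun a _ => Finset.mem_univ (p a))
    rw [Fintype.sum_option] at htot
    simp only [hsome, Finset.sum_const, Finset.card_univ, ZMod.card, smul_eq_mul] at htot
    rw [hcardV, haux] at htot
    omega
  -- n ≥ 1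
  have hn1 : 1 ≤ n := Nat.card_pos
  -- rule out n = 1, m = 2
  have hnotriv : ¬(n = 1 ∧ m = 2) := by
    rintro ⟨hn1', hm2⟩
    have hbot : Subgroup.center G = ⊥ := Subgroup.card_eq_one.mp (hn ▸ hn1')
    have hcm : ∀ a b : G, a * b = b * a := by
      intro a b
      have hD : ∀ u v : DihedralGroup m, u * v = v * u := by subst hm2; decide
      have h4 : π (a*b) = π (b*a) := by rw [map_mul, map_mul, hD]
      have h5 : π (a*b*(b*a)⁻¹) = 1 := by rw [map_mul, h4, map_inv, mul_inv_cancel]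
      have h6 := (hker _).mp h5
      rw [hbot, Subgroup.mem_bot] at h6
      exact mul_inv_eq_one.mp h6
    have htop : Subgroup.center G = ⊤ := by
      rw [Subgroup.eq_top_iff']
      intro g
      exact Subgroup.mem_center_iff.mpr (fun h => hcm h g)
    have h7 : n = Fintype.card G := by
      rw [hn, htop, ← Nat.card_eq_fintype_card]
      exact Subgroup.card_top
    rw [hG, hm2, hn1'] at h7
    omega
  have hN : m + 2 ≤ Fintype.card {g : G // g ∉ Subgroup.center G} := by
    rw [hcardV]
    have hsub : n*(2*m-1) = 2*n*m - n := by
      symm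
      apply Nat.sub_eq_of_eq_add
      obtain ⟨m', rfl⟩ : ∃ m', m = m' + 1 := ⟨m-1, by omega⟩
      have h9 : 2*(m'+1)-1 = 2*m'+1 := by omega
      rw [h9]; ring
    rw [← hsub]
    rcases Nat.lt_or_ge n 2 with h | h
    · have hn1' : n = 1 := by omega
      have hm3 : 3 ≤ m := by
        rcases Nat.lt_or_ge m 3 with h' | h'
        · exact absurd ⟨hn1', by omega⟩ hnotriv
        · exact h'
      rw [hn1', one_mul]; omega
    · calc m + 2 ≤ 2*(2*m-1) := by omega
        _ ≤ n*(2*m-1) := Nat.mul_le_mul_right _ h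
  -- adjacency matrix
  have hA : ∀ v w : {g : G // g ∉ Subgroup.center G},
      (ncGraph G).adjMatrix ℝ v w = if p v = p w then (0:ℝ) else 1 := by
    intro v w
    rw [SimpleGraph.adjMatrix_apply]
    have hAdj : (ncGraph G).Adj v w ↔ ¬ (p v = p w) := by
      show (v.1 * w.1 ≠ w.1 * v.1) ↔ _
      exact not_congr (comm_iff_part π hker v.1 w.1 v.2 w.2)
    by_cases h : p v = p w
    · simp [hAdj, h]
    · simp [hAdj, h]
  have hroots := charpoly_roots m n hm p hsome hnone hN ((ncGraph G).adjMatrix ℝ) hA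
  have hz : Fintype.card {g : G // g ∉ Subgroup.center G} - m - 1 = 2*n*m - n - m - 1 := by
    rw [hcardV]
  have hspec : adjSpectrum G
      = Multiset.replicate (2*n*m - n - m - 1) (0:ℝ)
        + Multiset.replicate (m-1) (-(n:ℝ))
        + {((n:ℝ) * ((m:ℝ)-1) + (n:ℝ) * Real.sqrt (((m:ℝ)-1)*(5*(m:ℝ)-1)))/2,
           ((n:ℝ) * ((m:ℝ)-1) - (n:ℝ) * Real.sqrt (((m:ℝ)-1)*(5*(m:ℝ)-1)))/2} := by
    show ((ncGraph G).adjMatrix ℝ).charpoly.roots = _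
    rw [hroots, hz]
  refine ⟨hspec, ?_⟩
  -- energy
  have hm2 : (2:ℝ) ≤ (m:ℝ) := by exact_mod_cast hm
  have hnn : (0:ℝ) ≤ (n:ℝ) := Nat.cast_nonneg n
  have hsq : ((m:ℝ)-1) ≤ Real.sqrt (((m:ℝ)-1)*(5*(m:ℝ)-1)) := by
    have h1 : ((m:ℝ)-1)^2 ≤ ((m:ℝ)-1)*(5*(m:ℝ)-1) := by nlinarith
    calc ((m:ℝ)-1) = Real.sqrt (((m:ℝ)-1)^2) := (Real.sqrt_sq (by linarith)).symm
      _ ≤ _ := Real.sqrt_le_sqrt h1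
  have hlpnn : (0:ℝ) ≤ ((n:ℝ) * ((m:ℝ)-1) + (n:ℝ) * Real.sqrt (((m:ℝ)-1)*(5*(m:ℝ)-1)))/2 := by
    have := Real.sqrt_nonneg (((m:ℝ)-1)*(5*(m:ℝ)-1))
    have h1 : (0:ℝ) ≤ (n:ℝ) * ((m:ℝ)-1) := mul_nonneg hnn (by linarith)
    have h2 : (0:ℝ) ≤ (n:ℝ) * Real.sqrt (((m:ℝ)-1)*(5*(m:ℝ)-1)) := mul_nonneg hnn this
    linarith
  have hlmnp : ((n:ℝ) * ((m:ℝ)-1) - (n:ℝ) * Real.sqrt (((m:ℝ)-1)*(5*(m:ℝ)-1)))/2 ≤ 0 := by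
    have h1 : (n:ℝ) * ((m:ℝ)-1) ≤ (n:ℝ) * Real.sqrt (((m:ℝ)-1)*(5*(m:ℝ)-1)) :=
      mul_le_mul_of_nonneg_left hsq hnn
    linarith
  rw [energy, hspec]
  simp only [Multiset.map_add, Multiset.sum_add, Multiset.map_replicate,
    Multiset.sum_replicate, abs_zero, smul_zero, Multiset.insert_eq_cons,
    Multiset.map_cons, Multiset.map_singleton, Multiset.sum_cons, Multiset.sum_singleton]
  rw [abs_of_nonneg hlpnn, abs_of_nonpos hlmnp, abs_of_nonpos (by linarith : -(n:ℝ) ≤ 0)]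
  have hcast : ((m - 1 : ℕ) : ℝ) = (m:ℝ) - 1 := by
    push_cast [Nat.cast_sub (by omega : 1 ≤ m)]
    ring
  rw [nsmul_eq_mul, hcast]
  ring
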